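/- Let g : ℝ × ℝ³ → ℝ be C¹ with ∇ₓg nonvanishing on the zero level set, satisfying ∂ₜg + V_I·∇ₓg = 0 where V_I = V_I N with N = ∇ₓg/‖∇ₓg‖. Then ∂ₜ(‖∇ₓg‖) + V_I·∇ₓ(‖∇ₓg‖) = −‖∇ₓg‖ N·∇ₓV_I along the zero level set. -/

import Mathlib

/-!
The kinematic equation holds at every point, so `∂ₜg = -V_I ‖∇ₓg‖` may be differentiated in
space. By symmetry of second derivatives `∂ₜ ∇ₓg = ∇ₓ ∂ₜg`, hence
`∂ₜ‖∇ₓg‖ = ⟪N, ∇ₓ ∂ₜg⟫`, and the product rule gives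
`∇ₓ ∂ₜg = -(V_I ∇ₓ‖∇ₓg‖ + ‖∇ₓg‖ ∇ₓV_I)`. Pairing with `N` gives the claim.
-/

open InnerProductSpace Function
open scoped RealInnerProductSpace

section Slices

variable {E : Type*} [NormedAddCommGroup E] [NormedSpace ℝ E] {g : ℝ → E → ℝ}

theorem fderiv_slice_eq_comp_inr {s : ℝ} {y : E} (hg : DifferentiableAt ℝ (uncurry g) (s, y)) :
    fderiv ℝ (g s) y = (fderiv ℝ (uncurry g) (s, y)).comp (ContinuousLinearMap.inr ℝ ℝ E) :=
  (hg.hasFDerivAt.comp y (hasFDerivAt_prodMk_right s y)).fderiv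

theorem deriv_slice_eq_fderiv_uncurry {t : ℝ} {y : E}
    (hg : DifferentiableAt ℝ (uncurry g) (t, y)) :
    deriv (fun s => g s y) t = fderiv ℝ (uncurry g) (t, y) (1, 0) := by
  have hline : HasDerivAt (fun s => (s, y)) ((1 : ℝ), (0 : E)) t :=
    (hasDerivAt_id t).prodMk (hasDerivAt_const t y)
  exact (hg.hasFDerivAt.comp_hasDerivAt t hline).deriv

theorem hasDerivAt_fderiv_slice (hg : ContDiff ℝ 2 (uncurry g)) (t : ℝ) (x : E) :
    HasDerivAt (fun s => fderiv ℝ (g s) x)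
      (fderiv ℝ (fun y => deriv (fun s => g s y) t) x) t := by
  have hG : Differentiable ℝ (uncurry g) := hg.differentiable (by norm_num)
  have hH : HasFDerivAt (fderiv ℝ (uncurry g)) (fderiv ℝ (fderiv ℝ (uncurry g)) (t, x)) (t, x) :=
    ((hg.fderiv_right (m := 1) (by norm_num)).differentiable one_ne_zero _).hasFDerivAt
  set H := fderiv ℝ (fderiv ℝ (uncurry g)) (t, x)
  have hsymm : ∀ v w, H v w = H w v := hg.contDiffAt.isSymmSndFDerivAt (by simp)
  have htime : HasDerivAt (fun s => fderiv ℝ (g s) x)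
      ((H (1, 0)).comp (ContinuousLinearMap.inr ℝ ℝ E)) t := by
    simp only [fderiv_slice_eq_comp_inr (hG _)]
    exact ((ContinuousLinearMap.compL ℝ E (ℝ × E) ℝ).flip
      (ContinuousLinearMap.inr ℝ ℝ E)).hasFDerivAt.comp_hasDerivAt t
        (hH.comp_hasDerivAt t ((hasDerivAt_id t).prodMk (hasDerivAt_const t x)))
  have hspace : HasFDerivAt (fun y => deriv (fun s => g s y) t)
      ((ContinuousLinearMap.apply ℝ ℝ ((1 : ℝ), (0 : E))).comp
        (H.comp (ContinuousLinearMap.inr ℝ ℝ E))) x := by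
    simp only [deriv_slice_eq_fderiv_uncurry (hG _)]
    exact (ContinuousLinearMap.apply ℝ ℝ ((1 : ℝ), (0 : E))).hasFDerivAt.comp x
      (hH.comp x (hasFDerivAt_prodMk_right t x))
  -- both sides are the mixed second derivative of `uncurry g`, taken in opposite orders
  convert htime using 1
  rw [hspace.fderiv]
  ext v
  exact hsymm _ _

end Slices

section Gradient

variable {E : Type*} [NormedAddCommGroup E] [InnerProductSpace ℝ E] [CompleteSpace E]

theorem hasDerivAt_gradient_slice {g : ℝ → E → ℝ} (hg : ContDiff ℝ 2 (uncurry g)) (t : ℝ) (x : E) :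
    HasDerivAt (fun s => gradient (g s) x) (gradient (fun y => deriv (fun s => g s y) t) x) t :=
  ((toDual ℝ E).symm.toLinearIsometry.toContinuousLinearMap :
    StrongDual ℝ E →L[ℝ] E).hasFDerivAt.comp_hasDerivAt t (hasDerivAt_fderiv_slice hg t x)

theorem ContDiff.differentiable_gradient {f : E → ℝ} (hf : ContDiff ℝ 2 f) :
    Differentiable ℝ (gradient f) :=
  ((toDual ℝ E).symm.toLinearIsometry.toContinuousLinearMap :
    StrongDual ℝ E →L[ℝ] E).differentiable.comp
      ((hf.fderiv_right (m := 1) (by norm_num)).differentiable one_ne_zero)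

theorem HasGradientAt.mul {f h : E → ℝ} {f' h' x : E} (hf : HasGradientAt f f' x)
    (hh : HasGradientAt h h' x) : HasGradientAt (fun y => f y * h y) (f x • h' + h x • f') x := by
  rw [hasGradientAt_iff_hasFDerivAt] at *
  refine (hf.mul hh).congr_fderiv ?_
  ext v
  simp

theorem HasGradientAt.neg {f : E → ℝ} {f' x : E} (hf : HasGradientAt f f' x) :
    HasGradientAt (fun y => -f y) (-f') x := by
  rw [hasGradientAt_iff_hasFDerivAt] at *
  refine hf.neg.congr_fderiv ?_
  ext v
  simp

end Gradient

theorem HasDerivAt.norm {F : Type*} [NormedAddCommGroup F] [InnerProductSpace ℝ F]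
    {f : ℝ → F} {f' : F} {t : ℝ} (hf : HasDerivAt f f' t) (h0 : f t ≠ 0) :
    HasDerivAt (fun s => ‖f s‖) (⟪f t, f'⟫_ℝ / ‖f t‖) t := by
  have hsq : ‖f t‖ ^ 2 ≠ 0 := by positivity
  convert (hf.norm_sq.sqrt hsq) using 1
  · simp [Real.sqrt_sq (norm_nonneg _)]
  · rw [Real.sqrt_sq (norm_nonneg _)]
    ring

/-- Level-set transport of the area density factor: if g is C² with nonvanishing spatial
gradient on its zero level set and satisfies ∂ₜg + V_I·∇ₓg = 0 with normal interface velocity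
V_I = V_I N, N = ∇ₓg/‖∇ₓg‖, then ∂ₜ‖∇ₓg‖ + V_I·∇ₓ‖∇ₓg‖ = −‖∇ₓg‖ N·∇ₓV_I
on the zero level set. -/
theorem levelset_gradient_norm_evolution
    (g VI : ℝ → EuclideanSpace ℝ (Fin 3) → ℝ)
    (hg : ContDiff ℝ 2 (fun p : ℝ × EuclideanSpace ℝ (Fin 3) => g p.1 p.2))
    (hVI : ContDiff ℝ 1 (fun p : ℝ × EuclideanSpace ℝ (Fin 3) => VI p.1 p.2))
    (hgrad : ∀ t x, g t x = 0 → gradient (g t) x ≠ 0)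
    -- kinematic equation ∂ₜg + V_I·∇ₓg = 0, where V_I·∇ₓg = VI ‖∇ₓg‖ since V_I = VI·N
    (hkin : ∀ t x, deriv (fun s => g s x) t + VI t x * ‖gradient (g t) x‖ = 0) :
    ∀ t x, g t x = 0 →
      deriv (fun s => ‖gradient (g s) x‖) t
        + (inner ℝ (VI t x • ((‖gradient (g t) x‖)⁻¹ • gradient (g t) x))
            (gradient (fun y => ‖gradient (g t) y‖) x) : ℝ)
      = - ‖gradient (g t) x‖ *
          (inner ℝ ((‖gradient (g t) x‖)⁻¹ • gradient (g t) x) (gradient (VI t) x) : ℝ) := by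
  intro t x hgx
  have hv : gradient (g t) x ≠ 0 := hgrad t x hgx
  have hnorm : DifferentiableAt ℝ (fun y => ‖gradient (g t) y‖) x :=
    (ContDiff.differentiable_gradient (hg.comp (contDiff_prodMk_right t)) x).norm ℝ hv
  have hV : DifferentiableAt ℝ (VI t) x :=
    (hVI.comp (contDiff_prodMk_right t)).differentiable one_ne_zero x
  have hdt := (hasDerivAt_gradient_slice hg t x).norm hv
  have hdt_eq : (fun y => deriv (fun s => g s y) t) = fun y => -(VI t y * ‖gradient (g t) y‖) :=
    funext fun y => eq_neg_of_add_eq_zero_left (hkin t y)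
  have hgrad_dt := (hV.hasGradientAt.mul hnorm.hasGradientAt).neg
  rw [← hdt_eq] at hgrad_dt
  rw [hdt.deriv, hgrad_dt.gradient]
  have hn : ‖gradient (g t) x‖ ≠ 0 := norm_ne_zero_iff.mpr hv
  simp only [real_inner_smul_left, real_inner_smul_right, inner_neg_right, inner_add_right]
  field_simp
  ring
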